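/- For n ≥ 2, every B-avoiding permutation of {1,...,n} lies in the union of the images of the four maps f_before, f_after, f_end, f_bump applied to the B-avoiding permutations of {1,...,n-1}. -/

import Mathlib

/-- `l` is a permutation of `{1, ..., n}`, viewed as the sequence of its values. -/
def IsPermOf (l : List ℕ) (n : ℕ) : Prop := l.Perm (List.range' 1 n)

/-- `l` is B-avoiding: there are no indices `a < b < c < d` with
`max {l a, l c} < min {l b, l d}`. -/
def BAvoid (l : List ℕ) : Prop :=
  ∀ a b c d : Fin l.length, a < b → b < c → c < d →
    ¬ (max (l.get a) (l.get c) < min (l.get b) (l.get d))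

/-- increase all values by 1 and insert `1` immediately before the value `2`. -/
def fBefore (σ : List ℕ) : List ℕ :=
  ((σ.map (· + 1)).take ((σ.map (· + 1)).idxOf 2)) ++
    1 :: ((σ.map (· + 1)).drop ((σ.map (· + 1)).idxOf 2))

/-- increase all values by 1 and insert `1` immediately after the value `2`. -/
def fAfter (σ : List ℕ) : List ℕ :=
  ((σ.map (· + 1)).take ((σ.map (· + 1)).idxOf 2 + 1)) ++
    1 :: ((σ.map (· + 1)).drop ((σ.map (· + 1)).idxOf 2 + 1))

/-- increase all values by 1 and append `1` at the end. -/
def fEnd (σ : List ℕ) : List ℕ := σ.map (· + 1) ++ [1]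

/-- increase all values by 1, replace the value `2` by `1`, and append `2` at the end. -/
def fBump (σ : List ℕ) : List ℕ :=
  (σ.map (· + 1)).map (fun x => if x = 2 then 1 else x) ++ [2]

/-!
Unless one of them is last, the values 1 and 2 of a B-avoiding permutation are adjacent: otherwise
`1 x 2 y` or `2 x 1 y` with `x, y ≥ 3` is a forbidden pattern. In each of the four resulting
shapes the preimage is obtained by deleting 1 (or, when 2 is last, deleting 2 and relabelling 1
as 2) and decrementing the remaining values; it is B-avoiding because it is order-isomorphic to a
subsequence.
-/

open List

lemma bAvoid_iff_sublist (l : List ℕ) :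
    BAvoid l ↔ ∀ w x y z : ℕ, [w, x, y, z] <+ l → ¬ max w y < min x z := by
  constructor
  · intro h w x y z hsub
    obtain ⟨is, hmap, hpw⟩ := sublist_eq_map_getElem hsub
    match is, hmap, hpw with
    | [a, b, c, d], hmap, hpw =>
      simp only [map_cons, map_nil, cons.injEq, and_true] at hmap
      obtain ⟨rfl, rfl, rfl, rfl⟩ := hmap
      simp only [pairwise_cons, forall_mem_cons] at hpw
      exact h a b c d hpw.1.1 hpw.2.1.1 hpw.2.2.1.1
  · intro h a b c d hab hbc hcd
    have hsub : map l.get [a, b, c, d] <+ l := by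
      apply map_getElem_sublist
      simp [hab, hbc, hcd, hab.trans hbc, hbc.trans hcd, (hab.trans hbc).trans hcd]
    exact h _ _ _ _ (by simpa using hsub)

lemma BAvoid.sublist {l l' : List ℕ} (hB : BAvoid l) (h : l' <+ l) : BAvoid l' := by
  rw [bAvoid_iff_sublist] at *
  exact fun w x y z hs => hB w x y z (hs.trans h)

lemma BAvoid.map {l : List ℕ} {g : ℕ → ℕ} (hB : BAvoid l)
    (hg : ∀ x ∈ l, ∀ y ∈ l, g x < g y → x < y) : BAvoid (l.map g) := by
  rw [bAvoid_iff_sublist] at *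
  intro w x y z hsub
  obtain ⟨l', hl', hmap⟩ := sublist_map_iff.1 hsub
  match l', hmap with
  | [w', x', y', z'], hmap =>
    simp only [map_cons, map_nil, cons.injEq, and_true] at hmap
    obtain ⟨rfl, rfl, rfl, rfl⟩ := hmap
    have hmem : ∀ a ∈ [w', x', y', z'], a ∈ l := fun a ha => hl'.subset ha
    simp only [mem_cons, not_mem_nil, or_false, forall_eq_or_imp, forall_eq] at hmem
    simp only [max_lt_iff, lt_min_iff]
    rintro ⟨⟨hwx, hyx⟩, hwz, hyz⟩
    refine hB w' x' y' z' hl' ?_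
    simp only [max_lt_iff, lt_min_iff]
    exact ⟨⟨hg _ hmem.1 _ hmem.2.1 hwx, hg _ hmem.2.2.1 _ hmem.2.1 hyx⟩,
      hg _ hmem.1 _ hmem.2.2.2 hwz, hg _ hmem.2.2.1 _ hmem.2.2.2 hyz⟩

lemma IsPermOf.nodup {l : List ℕ} {n : ℕ} (h : IsPermOf l n) : l.Nodup :=
  (Perm.nodup_iff h).2 nodup_range'

lemma IsPermOf.mem_iff {l : List ℕ} {n x : ℕ} (h : IsPermOf l n) :
    x ∈ l ↔ 1 ≤ x ∧ x ≤ n := by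
  rw [Perm.mem_iff h, mem_range'_1]
  omega

lemma isPermOf_map_sub_one {L : List ℕ} {n : ℕ} (h : IsPermOf (1 :: L) n) :
    IsPermOf (L.map (· - 1)) (n - 1) := by
  obtain ⟨m, rfl⟩ : ∃ m, n = m + 1 := Nat.exists_eq_succ_of_ne_zero (by
    rintro rfl; simpa using (Perm.length_eq h))
  have hL : L ~ range' 2 m := (perm_cons 1).1 (by simpa [IsPermOf, range'_succ] using h)
  have := hL.map (· - 1)
  rwa [map_sub_range' (by norm_num : 1 ≤ 2)] at this

lemma exists_bAvoid_map_add_one_eq {L : List ℕ} {n : ℕ} (hL : IsPermOf (1 :: L) n)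
    (hB : BAvoid L) :
    ∃ σ, IsPermOf σ (n - 1) ∧ BAvoid σ ∧ σ.map (· + 1) = L := by
  have hpos : ∀ x ∈ L, 1 ≤ x := fun x hx => (hL.mem_iff.1 (mem_cons_of_mem 1 hx)).1
  refine ⟨L.map (· - 1), isPermOf_map_sub_one hL, hB.map fun x _ y _ h => by omega, ?_⟩
  rw [map_map]
  conv_rhs => rw [← map_id L]
  exact map_congr_left fun x hx => by have := hpos x hx; simp; omega

lemma exists_fEnd_eq {A : List ℕ} {n : ℕ} (hπ : IsPermOf (A ++ [1]) n)
    (hB : BAvoid (A ++ [1])) :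
    ∃ σ, IsPermOf σ (n - 1) ∧ BAvoid σ ∧ fEnd σ = A ++ [1] := by
  obtain ⟨σ, hσ, hσB, hσA⟩ :=
    exists_bAvoid_map_add_one_eq ((perm_append_singleton 1 A).symm.trans hπ) (hB.sublist (by simp))
  exact ⟨σ, hσ, hσB, by rw [fEnd, hσA]⟩

lemma exists_fBefore_eq {A B : List ℕ} {n : ℕ} (hπ : IsPermOf (A ++ 1 :: 2 :: B) n)
    (hB : BAvoid (A ++ 1 :: 2 :: B)) :
    ∃ σ, IsPermOf σ (n - 1) ∧ BAvoid σ ∧ fBefore σ = A ++ 1 :: 2 :: B := by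
  have h2A : 2 ∉ A := fun h => disjoint_of_nodup_append hπ.nodup h (by simp)
  obtain ⟨σ, hσ, hσB, hσA⟩ :=
    exists_bAvoid_map_add_one_eq (perm_middle.symm.trans hπ) (hB.sublist (by simp))
  refine ⟨σ, hσ, hσB, ?_⟩
  rw [fBefore, hσA, idxOf_append_of_notMem h2A, idxOf_cons_self, add_zero, take_left, drop_left]

lemma exists_fAfter_eq {A B : List ℕ} {n : ℕ} (hπ : IsPermOf (A ++ 2 :: 1 :: B) n)
    (hB : BAvoid (A ++ 2 :: 1 :: B)) :
    ∃ σ, IsPermOf σ (n - 1) ∧ BAvoid σ ∧ fAfter σ = A ++ 2 :: 1 :: B := by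
  have h2A : 2 ∉ A := fun h => disjoint_of_nodup_append hπ.nodup h (by simp)
  have hperm : 1 :: (A ++ 2 :: B) ~ A ++ 2 :: 1 :: B := by
    have := (perm_middle (a := 1) (l₁ := A ++ [2]) (l₂ := B)).symm
    simpa only [append_assoc, cons_append, nil_append] using this
  obtain ⟨σ, hσ, hσB, hσA⟩ :=
    exists_bAvoid_map_add_one_eq (hperm.trans hπ) (hB.sublist (by simp))
  refine ⟨σ, hσ, hσB, ?_⟩
  have hsplit : A ++ 2 :: B = (A ++ [2]) ++ B := by simp
  have hlen : A.length + 1 = (A ++ [2]).length := by simp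
  rw [fAfter, hσA, idxOf_append_of_notMem h2A, idxOf_cons_self, add_zero, hsplit, hlen,
    take_left, drop_left]
  simp

lemma exists_fBump_eq {A : List ℕ} {n : ℕ} (hπ : IsPermOf (A ++ [2]) n)
    (hB : BAvoid (A ++ [2])) :
    ∃ σ, IsPermOf σ (n - 1) ∧ BAvoid σ ∧ fBump σ = A ++ [2] := by
  have h2A : 2 ∉ A := fun h => disjoint_of_nodup_append hπ.nodup h (by simp)
  have hA : ∀ x ∈ A, x = 1 ∨ 3 ≤ x := fun x hx => by
    have := hπ.mem_iff.1 (mem_append_left [2] hx)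
    have : x ≠ 2 := fun h => h2A (h ▸ hx)
    omega
  obtain ⟨m, rfl⟩ : ∃ m, n = m + 2 :=
    ⟨n - 2, by have := hπ.mem_iff.1 (by simp : 2 ∈ A ++ [2]); omega⟩
  have hperm : A ~ 1 :: range' 3 m :=
    (perm_cons 2).1 ((perm_append_singleton 2 A).symm.trans (hπ.trans (Perm.swap 2 1 _)))
  set g : ℕ → ℕ := fun x => if x = 1 then 1 else x - 1 with hg
  refine ⟨A.map g, ?_, (hB.sublist (sublist_append_left A [2])).map ?_, ?_⟩
  · have hrange : (range' 3 m).map g = range' 2 m := by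
      rw [← map_sub_range' (by norm_num : 1 ≤ 3)]
      refine map_congr_left fun x hx => ?_
      have := (mem_range'_1.1 hx).1
      simp only [hg]
      rw [if_neg (by omega)]
    have := hperm.map g
    rwa [map_cons, hrange] at this
  · intro x hx y hy h
    have := hA x hx
    have := hA y hy
    simp only [hg] at h
    split_ifs at h <;> omega
  · rw [fBump, map_map, map_map]
    congr 1
    conv_rhs => rw [← map_id A]
    refine map_congr_left fun x hx => ?_
    rcases hA x hx with rfl | hx3
    · simp [hg]
    · simp [hg, show x ≠ 1 by omega, show x - 1 + 1 = x by omega, show x ≠ 2 by omega]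

lemma BAvoid.not_sublist_one_two {l : List ℕ} (hB : BAvoid l) (hnd : l.Nodup)
    (hpos : ∀ z ∈ l, 1 ≤ z) {x y : ℕ} (h : [1, x, 2, y] <+ l ∨ [2, x, 1, y] <+ l) :
    False := by
  rcases h with h | h <;>
  · have hx := hpos x (h.subset (by simp))
    have hy := hpos y (h.subset (by simp))
    have hdistinct := hnd.sublist h
    simp only [nodup_cons, mem_cons, not_mem_nil, or_false, not_or] at hdistinct
    exact (bAvoid_iff_sublist l).1 hB _ x _ y h (by simp only [max_lt_iff, lt_min_iff]; omega)

lemma BAvoid.one_two_adjacent_or_last {π : List ℕ} {n : ℕ} (hπ : IsPermOf π n) (hn : 2 ≤ n)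
    (hB : BAvoid π) :
    (∃ A, π = A ++ [1]) ∨ (∃ A, π = A ++ [2]) ∨
      (∃ A B, π = A ++ 1 :: 2 :: B) ∨ (∃ A B, π = A ++ 2 :: 1 :: B) := by
  have hforbid : ∀ x y, [1, x, 2, y] <+ π ∨ [2, x, 1, y] <+ π → False := fun _ _ =>
    hB.not_sublist_one_two hπ.nodup fun z hz => (hπ.mem_iff.1 hz).1
  have h2 : 2 ∈ π := hπ.mem_iff.2 ⟨by norm_num, hn⟩
  obtain ⟨A, B, rfl⟩ := append_of_mem (hπ.mem_iff.2 ⟨le_rfl, by omega⟩ : 1 ∈ π)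
  rcases B with _ | ⟨b, B⟩
  · exact Or.inl ⟨A, rfl⟩
  by_cases hb : b = 2
  · exact Or.inr (Or.inr (Or.inl ⟨A, B, by rw [hb]⟩))
  have h2' : 2 ∈ A ∨ 2 ∈ B := by simpa [hb, eq_comm] using h2
  rcases h2' with h2A | h2B
  · obtain ⟨C, D, rfl⟩ := append_of_mem h2A
    rcases D with _ | ⟨d, D⟩
    · exact Or.inr (Or.inr (Or.inr ⟨C, b :: B, by simp⟩))
    · exact (hforbid d b (Or.inr (by simp))).elim
  · obtain ⟨C, D, rfl⟩ := append_of_mem h2B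
    rcases D with _ | ⟨d, D⟩
    · exact Or.inr (Or.inl ⟨A ++ 1 :: b :: C, by simp⟩)
    · exact (hforbid b d (Or.inl (by simp))).elim

theorem stmt9 (n : ℕ) (hn : 2 ≤ n) (π : List ℕ)
    (hπ : IsPermOf π n) (hB : BAvoid π) :
    ∃ σ : List ℕ, IsPermOf σ (n - 1) ∧ BAvoid σ ∧
      (fBefore σ = π ∨ fAfter σ = π ∨ fEnd σ = π ∨ fBump σ = π) := by
  rcases hB.one_two_adjacent_or_last hπ hn with
    ⟨A, rfl⟩ | ⟨A, rfl⟩ | ⟨A, B, rfl⟩ | ⟨A, B, rfl⟩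
  · obtain ⟨σ, hσ, hσB, hσπ⟩ := exists_fEnd_eq hπ hB
    exact ⟨σ, hσ, hσB, Or.inr (Or.inr (Or.inl hσπ))⟩
  · obtain ⟨σ, hσ, hσB, hσπ⟩ := exists_fBump_eq hπ hB
    exact ⟨σ, hσ, hσB, Or.inr (Or.inr (Or.inr hσπ))⟩
  · obtain ⟨σ, hσ, hσB, hσπ⟩ := exists_fBefore_eq hπ hB
    exact ⟨σ, hσ, hσB, Or.inl hσπ⟩
  · obtain ⟨σ, hσ, hσB, hσπ⟩ := exists_fAfter_eq hπ hB
    exact ⟨σ, hσ, hσB, Or.inr (Or.inl hσπ)⟩
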